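/- For every p with 0.3697 < p ≤ 1 there exist x, y, z > 0 such that p·x·y·z > N(p,x,y,z), where N(p,x,y,z) = ((2−√2)/4)p + ((1−p)/2)x²y² + ((2+√2 p)/4)x²y²z². Consequently, for such p the locally filtered state of ρ_χ(p) = p |Ψ⟩⟨Ψ| + (1−p)|00⟩⟨00|⊗(I₂/2), |Ψ⟩ = cos(π/8)|000⟩ + sin(π/8)|111⟩, obtained with filters F_A = diag(x,1), F_B = diag(y,1), F_C = diag(z,1), has correlation-matrix maximal singular value p x y z / N > 1, i.e. the Svetlichny bound 4 is exceeded. -/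

import Mathlib

open Matrix Polynomial
open scoped Kronecker ComplexOrder

/-- The Pauli matrices σ₁, σ₂, σ₃ (indexed by `Fin 3`). -/
noncomputable def pauli : Fin 3 → Matrix (Fin 2) (Fin 2) ℂ :=
  ![!![0, 1; 1, 0], !![0, -Complex.I; Complex.I, 0], !![1, 0; 0, -1]]

/-- The correlation matrix of a three-qubit state: `M_{j,(i,k)} = tr[ρ(σ_i⊗σ_j⊗σ_k)]`. -/
noncomputable def corrMat (ρ : Matrix (Fin 2 × Fin 2 × Fin 2) (Fin 2 × Fin 2 × Fin 2) ℂ) :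
    Matrix (Fin 3) (Fin 3 × Fin 3) ℝ :=
  fun j ik => ((ρ * (pauli ik.1 ⊗ₖ (pauli j ⊗ₖ pauli ik.2))).trace).re

/-- The observable `G = g₁σ₁ + g₂σ₂ + g₃σ₃` associated to a real vector `g ∈ ℝ³`. -/
noncomputable def obs (g : Fin 3 → ℝ) : Matrix (Fin 2) (Fin 2) ℂ :=
  ∑ i : Fin 3, ((g i : ℝ) : ℂ) • pauli i

/-- The Svetlichny operator built from the unit vectors `a, a', b, b', c, c' ∈ ℝ³`. -/
noncomputable def svetlichny (a a' b b' c c' : Fin 3 → ℝ) :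
    Matrix (Fin 2 × Fin 2 × Fin 2) (Fin 2 × Fin 2 × Fin 2) ℂ :=
  obs a ⊗ₖ ((obs b + obs b') ⊗ₖ obs c + (obs b - obs b') ⊗ₖ obs c')
    + obs a' ⊗ₖ ((obs b - obs b') ⊗ₖ obs c - (obs b + obs b') ⊗ₖ obs c')

/-- The vector `|Ψ⟩ = cos(π/8)|000⟩ + sin(π/8)|111⟩`. -/
noncomputable def psiChi : Fin 2 × Fin 2 × Fin 2 → ℂ :=
  fun x => if x = (0, 0, 0) then ((Real.cos (Real.pi / 8) : ℝ) : ℂ)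
    else if x = (1, 1, 1) then ((Real.sin (Real.pi / 8) : ℝ) : ℂ) else 0

/-- The rank-one projector `|0⟩⟨0|`. -/
noncomputable def E00 : Matrix (Fin 2) (Fin 2) ℂ := !![1, 0; 0, 0]

/-- The state `ρ_χ(p) = p|Ψ⟩⟨Ψ| + (1-p)|00⟩⟨00| ⊗ I₂/2`. -/
noncomputable def rhoChi (p : ℝ) :
    Matrix (Fin 2 × Fin 2 × Fin 2) (Fin 2 × Fin 2 × Fin 2) ℂ :=
  (p : ℂ) • Matrix.vecMulVec psiChi (star psiChi)
    + ((1 - p : ℝ) : ℂ) • (E00 ⊗ₖ (E00 ⊗ₖ (((2 : ℂ))⁻¹ • (1 : Matrix (Fin 2) (Fin 2) ℂ))))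

/-- The normalization factor `N(p,x,y,z)` of the filtered state of `ρ_χ(p)`. -/
noncomputable def Nchi (p x y z : ℝ) : ℝ :=
  (2 - Real.sqrt 2) / 4 * p + (1 - p) / 2 * (x ^ 2 * y ^ 2)
    + (2 + Real.sqrt 2 * p) / 4 * (x ^ 2 * y ^ 2 * z ^ 2)

/-- The filtered state of `ρ_χ(p)` with filters `diag(x,1), diag(y,1), diag(z,1)`. -/
noncomputable def rhoChiFiltered (p x y z : ℝ) :
    Matrix (Fin 2 × Fin 2 × Fin 2) (Fin 2 × Fin 2 × Fin 2) ℂ :=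
  ((Nchi p x y z : ℝ) : ℂ)⁻¹ •
    ((Matrix.diagonal ![(x : ℂ), 1] ⊗ₖ (Matrix.diagonal ![(y : ℂ), 1] ⊗ₖ
        Matrix.diagonal ![(z : ℂ), 1]))
      * rhoChi p *
      (Matrix.diagonal ![(x : ℂ), 1] ⊗ₖ (Matrix.diagonal ![(y : ℂ), 1] ⊗ₖ
        Matrix.diagonal ![(z : ℂ), 1]))ᴴ)

/-!
The filtered state is, up to its normalization `N`, a combination of the operators
`|aaa⟩⟨bbb|` and of one product operator, so its Pauli correlation tensor factorizes through
single-qubit matrix entries: `T_{ijk} = α Re(σᵢ(1,0) σⱼ(1,0) σₖ(1,0)) + τ σᵢ(0,0) σⱼ(0,0) σₖ(0,0)`,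
where `α = p x y z / √2` comes from the coherences and `τ` from the populations. The rows of the
correlation matrix are then orthogonal with squared lengths `2α², 2α², τ²`, and `|τ| ≤ N`, so the
largest singular value is `√2 α / N = p x y z / N`; the Svetlichny settings `σ₁, σ₂` on the first
two qubits and `(σ₁ ∓ σ₂)/√2` on the third pick out `4√2 α / N = 4 p x y z / N`.
For the filters, `t = x y z = 2p/(2 + √2 p)` maximizes `p t - (2 + √2 p) t² / 4`, which beats the
constant term `(2 - √2) p / 4` of `N` exactly when `p > (2 - √2)/(3 - √2) ≈ 0.36940`; taking
`x = 1/1000`, `y = 1` makes the remaining term of `N` negligible.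
-/

namespace Matrix

theorem kronecker_sub {R l m n p : Type*} [Ring R] (A : Matrix l m R) (B₁ B₂ : Matrix n p R) :
    A ⊗ₖ (B₁ - B₂) = A ⊗ₖ B₁ - A ⊗ₖ B₂ := by
  ext
  simp [mul_sub]

variable {R : Type*} [CommSemiring R] [StarRing R]

theorem trace_conj_kronecker_mul_kronecker {l m n p : Type*} [Fintype l] [Fintype m] [Fintype n]
    [Fintype p] (F : Matrix l m R) (G : Matrix n p R) (A : Matrix m m R) (B : Matrix p p R)
    (P : Matrix l l R) (Q : Matrix n n R) :
    ((F ⊗ₖ G) * (A ⊗ₖ B) * (F ⊗ₖ G)ᴴ * (P ⊗ₖ Q)).trace =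
      (F * A * Fᴴ * P).trace * (G * B * Gᴴ * Q).trace := by
  rw [conjTranspose_kronecker, ← mul_kronecker_mul, ← mul_kronecker_mul, ← mul_kronecker_mul,
    trace_kronecker]

variable {n : Type*} [Fintype n] [DecidableEq n]

theorem trace_diagonal_mul_single_mul (d : n → R) (a b : n) (P : Matrix n n R) :
    (diagonal d * single a b 1 * (diagonal d)ᴴ * P).trace = d a * star (d b) * P b a := by
  rw [Matrix.mul_assoc, Matrix.mul_assoc, trace_mul_comm, Matrix.mul_assoc, trace_single_mul,
    diagonal_conjTranspose, one_smul, mul_diagonal, diagonal_mul, Pi.star_apply]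
  ring

theorem trace_diagonal_mul_diagonal_conjTranspose_mul (d : n → R) (P : Matrix n n R) :
    (diagonal d * (diagonal d)ᴴ * P).trace = ∑ i, d i * star (d i) * P i i := by
  simp [diagonal_conjTranspose, diagonal_mul_diagonal, trace, diagonal_mul]

end Matrix

lemma pauli_isHermitian (i : Fin 3) : (pauli i).IsHermitian := by
  fin_cases i <;> ext a b <;> fin_cases a <;> fin_cases b <;> simp [pauli]

lemma pauli_apply_one_one (i : Fin 3) : pauli i 1 1 = -pauli i 0 0 := by
  fin_cases i <;> simp [pauli]

lemma obs_add (a b : Fin 3 → ℝ) : obs (a + b) = obs a + obs b := by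
  simp [obs, add_smul, Finset.sum_add_distrib]

lemma obs_sub (a b : Fin 3 → ℝ) : obs (a - b) = obs a - obs b := by
  simp [obs, sub_smul, Finset.sum_sub_distrib]

lemma cos_sq_pi_div_eight : Real.cos (Real.pi / 8) ^ 2 = (2 + Real.sqrt 2) / 4 := by
  rw [Real.cos_pi_div_eight, div_pow, Real.sq_sqrt (by positivity)]
  norm_num

lemma sin_sq_pi_div_eight : Real.sin (Real.pi / 8) ^ 2 = (2 - Real.sqrt 2) / 4 := by
  rw [Real.sin_sq, cos_sq_pi_div_eight]
  ring

lemma cos_mul_sin_pi_div_eight :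
    Real.cos (Real.pi / 8) * Real.sin (Real.pi / 8) = Real.sqrt 2 / 4 := by
  have h := Real.sin_two_mul (Real.pi / 8)
  rw [show 2 * (Real.pi / 8) = Real.pi / 4 by ring, Real.sin_pi_div_four] at h
  linarith

lemma isGreatest_sqrt_roots_charpoly_diagonal {a b : ℝ} (ha : 0 ≤ a) (hb : |b| ≤ a) :
    IsGreatest {s : ℝ | 0 ≤ s ∧ (diagonal ![a ^ 2, a ^ 2, b ^ 2]).charpoly.IsRoot (s ^ 2)} a := by
  simp only [charpoly_diagonal, IsRoot.def, Fin.prod_univ_three, eval_mul, eval_sub, eval_X,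
    eval_C, Matrix.cons_val_zero, Matrix.cons_val_one, Matrix.cons_val_two, Matrix.head_cons,
    Matrix.tail_cons, mul_eq_zero, sub_eq_zero]
  refine ⟨⟨ha, Or.inl (Or.inl rfl)⟩, ?_⟩
  rintro s ⟨hs, (h | h) | h⟩
  · nlinarith
  · nlinarith
  · nlinarith [sq_abs b, abs_nonneg b]

noncomputable def correlator (T : Fin 3 → Fin 3 → Fin 3 → ℝ) (a b c : Fin 3 → ℝ) : ℝ :=
  ∑ i, ∑ j, ∑ k, a i * b j * c k * T i j k

noncomputable def svetlichnyValue (T : Fin 3 → Fin 3 → Fin 3 → ℝ) (a a' b b' c c' : Fin 3 → ℝ) :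
    ℝ :=
  correlator T a (b + b') c + correlator T a (b - b') c'
    + correlator T a' (b - b') c - correlator T a' (b + b') c'

section CorrelationTensor

variable {ρ : Matrix (Fin 2 × Fin 2 × Fin 2) (Fin 2 × Fin 2 × Fin 2) ℂ}
  {T : Fin 3 → Fin 3 → Fin 3 → ℝ}

lemma trace_mul_obs_kronecker
    (hT : ∀ i j k, (ρ * (pauli i ⊗ₖ (pauli j ⊗ₖ pauli k))).trace = T i j k)
    (a b c : Fin 3 → ℝ) :
    (ρ * (obs a ⊗ₖ (obs b ⊗ₖ obs c))).trace = correlator T a b c := by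
  simp only [obs, Fin.sum_univ_three, add_kronecker, kronecker_add, smul_kronecker,
    kronecker_smul, Matrix.mul_add, Matrix.mul_smul, trace_add, trace_smul, hT, correlator]
  push_cast
  ring

lemma trace_svetlichny_mul
    (hT : ∀ i j k, (ρ * (pauli i ⊗ₖ (pauli j ⊗ₖ pauli k))).trace = T i j k)
    (a a' b b' c c' : Fin 3 → ℝ) :
    (svetlichny a a' b b' c c' * ρ).trace = svetlichnyValue T a a' b b' c c' := by
  rw [trace_mul_comm, svetlichny, ← obs_add, ← obs_sub]
  simp only [kronecker_add, kronecker_sub, Matrix.mul_add, Matrix.mul_sub, trace_add, trace_sub,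
    trace_mul_obs_kronecker hT, svetlichnyValue]
  push_cast
  ring

end CorrelationTensor

noncomputable def ghzCorrelation (α τ : ℝ) (i j k : Fin 3) : ℝ :=
  α * (pauli i 1 0 * pauli j 1 0 * pauli k 1 0).re
    + τ * (pauli i 0 0 * pauli j 0 0 * pauli k 0 0).re

lemma mul_ghzCorrelation (r α τ : ℝ) (i j k : Fin 3) :
    r * ghzCorrelation α τ i j k = ghzCorrelation (r * α) (r * τ) i j k := by
  simp only [ghzCorrelation]
  ring

noncomputable def ghzCorrMat (α τ : ℝ) : Matrix (Fin 3) (Fin 3 × Fin 3) ℝ :=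
  fun j ik => ghzCorrelation α τ ik.1 j ik.2

lemma ghzCorrMat_mul_transpose (α τ : ℝ) :
    ghzCorrMat α τ * (ghzCorrMat α τ)ᵀ = diagonal ![2 * α ^ 2, 2 * α ^ 2, τ ^ 2] := by
  ext j j'
  fin_cases j <;> fin_cases j' <;>
    simp [mul_apply, Fintype.sum_prod_type, Fin.sum_univ_three, ghzCorrMat, ghzCorrelation,
      pauli] <;> ring

lemma svetlichnyValue_ghzCorrelation (α τ : ℝ) :
    svetlichnyValue (ghzCorrelation α τ) ![1, 0, 0] ![0, 1, 0] ![1, 0, 0] ![0, 1, 0]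
      ![Real.sqrt 2 / 2, -(Real.sqrt 2 / 2), 0] ![Real.sqrt 2 / 2, Real.sqrt 2 / 2, 0] =
      4 * Real.sqrt 2 * α := by
  simp [svetlichnyValue, correlator, Fin.sum_univ_three, ghzCorrelation, pauli]
  ring

lemma psiChi_eq : psiChi = ((Real.cos (Real.pi / 8) : ℝ) : ℂ) • Pi.single (0, 0, 0) 1
    + ((Real.sin (Real.pi / 8) : ℝ) : ℂ) • Pi.single (1, 1, 1) 1 := by
  ext ⟨a, b, c⟩
  fin_cases a <;> fin_cases b <;> fin_cases c <;> simp [psiChi]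

lemma rhoChi_eq (p : ℝ) : rhoChi p =
    (p : ℂ) • ∑ a : Fin 2, ∑ b : Fin 2,
      ((![Real.cos (Real.pi / 8), Real.sin (Real.pi / 8)] a *
        ![Real.cos (Real.pi / 8), Real.sin (Real.pi / 8)] b : ℝ) : ℂ) •
        (single a b 1 ⊗ₖ (single a b 1 ⊗ₖ single a b 1))
    + ((1 - p : ℝ) : ℂ) • (single 0 0 1 ⊗ₖ (single 0 0 1 ⊗ₖ ((2 : ℂ)⁻¹ • 1))) := by
  have hE : E00 = single 0 0 1 := by
    ext i j
    fin_cases i <;> fin_cases j <;> rfl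
  simp only [rhoChi, hE, psiChi_eq, star_add, star_smul, Complex.star_def, Complex.conj_ofReal,
    Pi.star_single, star_one, add_vecMulVec, vecMulVec_add, smul_vecMulVec, vecMulVec_smul,
    ← single_eq_single_vecMulVec_single, single_kronecker_single, mul_one, Fin.sum_univ_two,
    Matrix.cons_val_zero, Matrix.cons_val_one, Complex.ofReal_mul]
  module

noncomputable def filterChi (x y z : ℝ) :
    Matrix (Fin 2 × Fin 2 × Fin 2) (Fin 2 × Fin 2 × Fin 2) ℂ :=
  diagonal ![(x : ℂ), 1] ⊗ₖ (diagonal ![(y : ℂ), 1] ⊗ₖ diagonal ![(z : ℂ), 1])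

/-- The `α` of the unnormalized filtered state; `zzzChi` is its `τ`. -/
noncomputable def xxxChi (p x y z : ℝ) : ℝ :=
  2 * p * (Real.cos (Real.pi / 8) * Real.sin (Real.pi / 8)) * (x * y * z)

noncomputable def zzzChi (p x y z : ℝ) : ℝ :=
  p * (Real.cos (Real.pi / 8) ^ 2 * (x * y * z) ^ 2 - Real.sin (Real.pi / 8) ^ 2)
    + (1 - p) / 2 * (x ^ 2 * y ^ 2) * (z ^ 2 - 1)

lemma trace_filtered_rhoChi_mul_pauli (p x y z : ℝ) (i j k : Fin 3) :
    (filterChi x y z * rhoChi p * (filterChi x y z)ᴴ * (pauli i ⊗ₖ (pauli j ⊗ₖ pauli k))).trace =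
      ghzCorrelation (xxxChi p x y z) (zzzChi p x y z) i j k := by
  simp only [filterChi, rhoChi_eq, Matrix.mul_add, Matrix.add_mul, Matrix.mul_smul,
    Matrix.smul_mul, trace_add, trace_smul, trace_conj_kronecker_mul_kronecker, Matrix.mul_one,
    trace_diagonal_mul_single_mul, trace_diagonal_mul_diagonal_conjTranspose_mul,
    Fin.sum_univ_two, ghzCorrelation, xxxChi, zzzChi, Complex.ofReal_add, Complex.ofReal_mul,
    Complex.re_eq_add_conj, map_mul, ← Complex.star_def, (pauli_isHermitian _).apply,
    pauli_apply_one_one]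
  simp only [Matrix.cons_val_zero, Matrix.cons_val_one, Complex.star_def, Complex.conj_ofReal,
    map_one]
  push_cast
  ring

lemma trace_rhoChiFiltered_mul_pauli (p x y z : ℝ) (i j k : Fin 3) :
    (rhoChiFiltered p x y z * (pauli i ⊗ₖ (pauli j ⊗ₖ pauli k))).trace =
      ghzCorrelation (xxxChi p x y z / Nchi p x y z) (zzzChi p x y z / Nchi p x y z) i j k := by
  change (((Nchi p x y z : ℂ)⁻¹ • (filterChi x y z * rhoChi p * (filterChi x y z)ᴴ)) * _).trace = _
  rw [smul_mul, trace_smul, trace_filtered_rhoChi_mul_pauli, smul_eq_mul, ← Complex.ofReal_inv,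
    ← Complex.ofReal_mul, mul_ghzCorrelation, inv_mul_eq_div, inv_mul_eq_div]

lemma corrMat_rhoChiFiltered (p x y z : ℝ) :
    corrMat (rhoChiFiltered p x y z) =
      ghzCorrMat (xxxChi p x y z / Nchi p x y z) (zzzChi p x y z / Nchi p x y z) := by
  ext j ⟨i, k⟩
  rw [corrMat, trace_rhoChiFiltered_mul_pauli, Complex.ofReal_re, ghzCorrMat]

lemma corrMat_mul_transpose_rhoChiFiltered (p x y z : ℝ) :
    corrMat (rhoChiFiltered p x y z) * (corrMat (rhoChiFiltered p x y z))ᵀ =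
      diagonal ![(p * x * y * z / Nchi p x y z) ^ 2, (p * x * y * z / Nchi p x y z) ^ 2,
        (zzzChi p x y z / Nchi p x y z) ^ 2] := by
  have h : 2 * (xxxChi p x y z / Nchi p x y z) ^ 2 = (p * x * y * z / Nchi p x y z) ^ 2 := by
    rw [xxxChi, cos_mul_sin_pi_div_eight]
    linear_combination (p * x * y * z / Nchi p x y z) ^ 2 / 2 * Real.sq_sqrt zero_le_two
  rw [corrMat_rhoChiFiltered, ghzCorrMat_mul_transpose, h]

lemma trace_svetlichny_mul_rhoChiFiltered (p x y z : ℝ) :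
    (svetlichny ![1, 0, 0] ![0, 1, 0] ![1, 0, 0] ![0, 1, 0]
      ![Real.sqrt 2 / 2, -(Real.sqrt 2 / 2), 0] ![Real.sqrt 2 / 2, Real.sqrt 2 / 2, 0] *
        rhoChiFiltered p x y z).trace = ((4 * (p * x * y * z / Nchi p x y z) : ℝ) : ℂ) := by
  rw [trace_svetlichny_mul (trace_rhoChiFiltered_mul_pauli p x y z),
    svetlichnyValue_ghzCorrelation, xxxChi, cos_mul_sin_pi_div_eight]
  congr 1
  linear_combination 2 * (p * x * y * z / Nchi p x y z) * Real.sq_sqrt zero_le_two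

lemma abs_zzzChi_le_Nchi {p : ℝ} (hp0 : 0 ≤ p) (hp1 : p ≤ 1) (x y z : ℝ) :
    |zzzChi p x y z| ≤ Nchi p x y z := by
  have hN : Nchi p x y z =
      (p * Real.cos (Real.pi / 8) ^ 2 * (x * y * z) ^ 2 + (1 - p) / 2 * (x ^ 2 * y ^ 2) * z ^ 2)
        + (p * Real.sin (Real.pi / 8) ^ 2 + (1 - p) / 2 * (x ^ 2 * y ^ 2)) := by
    rw [Nchi, cos_sq_pi_div_eight, sin_sq_pi_div_eight]
    ring
  have hz : zzzChi p x y z =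
      (p * Real.cos (Real.pi / 8) ^ 2 * (x * y * z) ^ 2 + (1 - p) / 2 * (x ^ 2 * y ^ 2) * z ^ 2)
        - (p * Real.sin (Real.pi / 8) ^ 2 + (1 - p) / 2 * (x ^ 2 * y ^ 2)) := by
    rw [zzzChi]
    ring
  have hq : 0 ≤ (1 - p) / 2 := by linarith
  rw [hN, hz, abs_le]
  constructor <;> nlinarith [mul_nonneg hq (by positivity : 0 ≤ x ^ 2 * y ^ 2),
    mul_nonneg hq (by positivity : 0 ≤ x ^ 2 * y ^ 2 * z ^ 2),
    mul_nonneg hp0 (by positivity : 0 ≤ Real.cos (Real.pi / 8) ^ 2 * (x * y * z) ^ 2),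
    mul_nonneg hp0 (sq_nonneg (Real.sin (Real.pi / 8)))]

lemma Nchi_pos {p : ℝ} (hp0 : 0 < p) (hp1 : p ≤ 1) (x y z : ℝ) : 0 < Nchi p x y z := by
  have hs : Real.sqrt 2 < 2 := by
    rw [Real.sqrt_lt' two_pos]
    norm_num
  have hq : 0 ≤ (1 - p) / 2 := by linarith
  have hconst := mul_pos (by linarith : 0 < (2 - Real.sqrt 2) / 4) hp0
  rw [Nchi]
  nlinarith [mul_nonneg hq (by positivity : 0 ≤ x ^ 2 * y ^ 2),
    mul_nonneg (by positivity : 0 ≤ (2 + Real.sqrt 2 * p) / 4)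
      (by positivity : 0 ≤ x ^ 2 * y ^ 2 * z ^ 2)]

lemma exists_Nchi_lt {p : ℝ} (hp : 0.3697 < p) :
    ∃ x y z : ℝ, 0 < x ∧ 0 < y ∧ 0 < z ∧ Nchi p x y z < p * x * y * z := by
  have h2 := Real.sq_sqrt (zero_le_two : (0 : ℝ) ≤ 2)
  have hlb : 1.41421 < Real.sqrt 2 := by nlinarith [Real.sqrt_nonneg 2]
  have hub : Real.sqrt 2 < 1.41422 := by nlinarith [Real.sqrt_nonneg 2]
  have hD : 0 < 2 + Real.sqrt 2 * p := by positivity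
  refine ⟨1 / 1000, 1, 2000 * p / (2 + Real.sqrt 2 * p), by norm_num, one_pos, by positivity, ?_⟩
  have gain : 0 < p ^ 2 -
      ((2 - Real.sqrt 2) / 4 * p + (1 - p) / 2000000) * (2 + Real.sqrt 2 * p) := by
    nlinarith [mul_pos (sub_pos.2 hp) (sub_pos.2 hlb), mul_pos (sub_pos.2 hp) (sub_pos.2 hub)]
  rw [Nchi, ← sub_pos]
  field_simp
  nlinarith [gain]

/-- For every `0.3697 < p ≤ 1` there are filters with `p·x·y·z > N(p,x,y,z)`; consequently
the maximal singular value of the correlation matrix of the filtered state is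
`p·x·y·z/N > 1` and the Svetlichny bound `4` is exceeded. -/
theorem hidden_nonlocality_rhoChi (p : ℝ) (hp : 0.3697 < p) (hp1 : p ≤ 1) :
    ∃ x y z : ℝ, 0 < x ∧ 0 < y ∧ 0 < z ∧
      p * x * y * z > Nchi p x y z ∧
      IsGreatest
        {s : ℝ | 0 ≤ s ∧
          (corrMat (rhoChiFiltered p x y z) *
            (corrMat (rhoChiFiltered p x y z))ᵀ).charpoly.IsRoot (s ^ 2)}
        (p * x * y * z / Nchi p x y z) ∧
      1 < p * x * y * z / Nchi p x y z ∧
      (∃ a a' b b' c c' : Fin 3 → ℝ,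
        (∑ i : Fin 3, a i ^ 2 = 1) ∧ (∑ i : Fin 3, a' i ^ 2 = 1) ∧
        (∑ i : Fin 3, b i ^ 2 = 1) ∧ (∑ i : Fin 3, b' i ^ 2 = 1) ∧
        (∑ i : Fin 3, c i ^ 2 = 1) ∧ (∑ i : Fin 3, c' i ^ 2 = 1) ∧
        4 < ‖(svetlichny a a' b b' c c' * rhoChiFiltered p x y z).trace‖) := by
  have hp0 : 0 < p := by linarith
  obtain ⟨x, y, z, hx, hy, hz, hlt⟩ := exists_Nchi_lt hp
  have hN := Nchi_pos hp0 hp1 x y z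
  have hratio : 1 < p * x * y * z / Nchi p x y z := (one_lt_div hN).2 hlt
  refine ⟨x, y, z, hx, hy, hz, hlt, ?_, hratio, ![1, 0, 0], ![0, 1, 0], ![1, 0, 0], ![0, 1, 0],
    ![Real.sqrt 2 / 2, -(Real.sqrt 2 / 2), 0], ![Real.sqrt 2 / 2, Real.sqrt 2 / 2, 0],
    by simp [Fin.sum_univ_three], by simp [Fin.sum_univ_three], by simp [Fin.sum_univ_three],
    by simp [Fin.sum_univ_three], by simp [Fin.sum_univ_three, div_pow]; norm_num,
    by simp [Fin.sum_univ_three, div_pow]; norm_num, ?_⟩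
  · rw [corrMat_mul_transpose_rhoChiFiltered]
    refine isGreatest_sqrt_roots_charpoly_diagonal (by positivity) ?_
    rw [abs_div, abs_of_pos hN, div_le_div_iff_of_pos_right hN]
    exact (abs_zzzChi_le_Nchi hp0.le hp1 x y z).trans hlt.le
  · rw [trace_svetlichny_mul_rhoChiFiltered, Complex.norm_real, Real.norm_eq_abs,
      abs_of_pos (by positivity)]
    linarith
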